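/- Let E be a directed graph on a type V, let u v : V, and let E' be the directed graph with an edge from a to b iff E a b or (a, b) = (u, v). Then for all x y : V and all t ℓ : ℕ, there are t walks from x to y with total length ℓ in E' if and only if there exist t₋ t₊ t₀ ℓ₋ ℓ₁ ℓ₂ ℓ₀ : ℕ such that: there are t₋ walks from x to y with total length ℓ₋ in E, there are t₊ walks from x to u with total length ℓ₁ in E, there are t₊ walks from v to y with total length ℓ₂ in E, there are t₀ walks from v to u with total length ℓ₀ in E, t₊ = 0 implies t₀ = 0, t₋ + t₊ = t, and ℓ₋ + ℓ₁ + ℓ₂ + ℓ₀ + t₊ + t₀ = ℓ. -/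
import Mathlib


/-- There is a walk of length `n` from `x` to `y` in the directed graph `E`. -/
def HasWalk {V : Type*} (E : V → V → Prop) (n : ℕ) (x y : V) : Prop :=
  ∃ f : Fin (n + 1) → V, f 0 = x ∧ f (Fin.last n) = y ∧
    ∀ i : Fin n, E (f i.castSucc) (f i.succ)

/-- There are `t` walks from `x` to `y` with total length `ℓ` in `E`. -/
def HasWalks {V : Type*} (E : V → V → Prop) (t ℓ : ℕ) (x y : V) : Prop :=
  ∃ L : Fin t → ℕ, ∑ j, L j = ℓ ∧ ∀ j, HasWalk E (L j) x y

section Aux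

variable {V : Type*} {E F : V → V → Prop} {x y z : V} {m n : ℕ}

private lemma hasWalk_cast {m' : ℕ} (h : HasWalk E m x y) (e : m = m') : HasWalk E m' x y :=
  e ▸ h

private lemma hasWalk_zero (E : V → V → Prop) (x : V) : HasWalk E 0 x x :=
  ⟨fun _ => x, rfl, rfl, fun i => i.elim0⟩

private lemma hasWalk_zero_eq (h : HasWalk E 0 x y) : x = y := by
  obtain ⟨f, h1, h2, _⟩ := h
  rw [← h1, ← h2]
  congr

private lemma hasWalk_mono (hEF : ∀ a b, E a b → F a b) (h : HasWalk E n x y) :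
    HasWalk F n x y := by
  obtain ⟨f, h1, h2, h3⟩ := h
  exact ⟨f, h1, h2, fun i => hEF _ _ (h3 i)⟩

private lemma hasWalk_cons (hE : E x z) (h : HasWalk E n z y) : HasWalk E (n + 1) x y := by
  obtain ⟨f, h1, h2, h3⟩ := h
  refine ⟨Fin.cons x f, Fin.cons_zero _ _, ?_, ?_⟩
  · rw [← Fin.succ_last, Fin.cons_succ, h2]
  · intro i
    induction i using Fin.cases with
    | zero => simpa [Fin.cons_succ, h1] using hE
    | succ j => simpa [← Fin.succ_castSucc, Fin.cons_succ] using h3 j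

private lemma hasWalk_tail (h : HasWalk E (n + 1) x y) : ∃ z, E x z ∧ HasWalk E n z y := by
  obtain ⟨f, h1, h2, h3⟩ := h
  refine ⟨f 1, by simpa [h1] using h3 0, fun i => f i.succ, rfl, ?_, ?_⟩
  · show f (Fin.last n).succ = y
    rw [Fin.succ_last]; exact h2
  · intro i
    simpa [← Fin.succ_castSucc] using h3 i.succ

private lemma hasWalk_concat (h1 : HasWalk E m x y) (h2 : HasWalk E n y z) :
    HasWalk E (m + n) x z := by
  induction m generalizing x with
  | zero =>
    obtain rfl := hasWalk_zero_eq h1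
    exact hasWalk_cast h2 (by omega)
  | succ m ih =>
    obtain ⟨w, hw, h1'⟩ := hasWalk_tail h1
    exact hasWalk_cast (hasWalk_cons hw (ih h1')) (by omega)

private lemma hasWalk_single (hE : E x y) : HasWalk E 1 x y :=
  hasWalk_cons hE (hasWalk_zero E y)

private lemma hasWalks_cast {t ℓ ℓ' : ℕ} (h : HasWalks E t ℓ x y) (e : ℓ = ℓ') :
    HasWalks E t ℓ' x y := e ▸ h

private lemma hasWalks_nil : HasWalks E 0 0 x y :=
  ⟨fun i => i.elim0, by simp, fun j => j.elim0⟩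

private lemma hasWalks_zero_len {ℓ : ℕ} (h : HasWalks E 0 ℓ x y) : ℓ = 0 := by
  obtain ⟨L, hs, _⟩ := h
  simpa using hs.symm

private lemma hasWalks_single (h : HasWalk E n x y) : HasWalks E 1 n x y :=
  ⟨fun _ => n, by simp, fun _ => h⟩

private lemma hasWalks_mono (hEF : ∀ a b, E a b → F a b) {t ℓ : ℕ} (h : HasWalks E t ℓ x y) :
    HasWalks F t ℓ x y := by
  obtain ⟨L, hs, hw⟩ := h
  exact ⟨L, hs, fun j => hasWalk_mono hEF (hw j)⟩

private lemma hasWalk_inl (u v : V) (h : HasWalk E n x y) :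
    HasWalk (fun a b => E a b ∨ (a, b) = (u, v)) n x y :=
  hasWalk_mono (fun _ _ hab => Or.inl hab) h

private lemma hasWalks_inl (u v : V) {t ℓ : ℕ} (h : HasWalks E t ℓ x y) :
    HasWalks (fun a b => E a b ∨ (a, b) = (u, v)) t ℓ x y :=
  hasWalks_mono (fun _ _ hab => Or.inl hab) h

private lemma hasWalks_append {t1 t2 l1 l2 : ℕ} (h1 : HasWalks E t1 l1 x y)
    (h2 : HasWalks E t2 l2 x y) : HasWalks E (t1 + t2) (l1 + l2) x y := by
  obtain ⟨A, hA, hA2⟩ := h1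
  obtain ⟨B, hB, hB2⟩ := h2
  refine ⟨Fin.append A B, ?_, ?_⟩
  · rw [Fin.sum_univ_add]
    simp [Fin.append_left, Fin.append_right, hA, hB]
  · intro j
    refine Fin.addCases (fun i => ?_) (fun i => ?_) j
    · rw [Fin.append_left]; exact hA2 i
    · rw [Fin.append_right]; exact hB2 i

private lemma hasWalks_split {t ℓ : ℕ} (h : HasWalks E (t + 1) ℓ x y) :
    ∃ ℓ' n, ℓ' + n = ℓ ∧ HasWalks E t ℓ' x y ∧ HasWalk E n x y := by
  obtain ⟨L, hs, hw⟩ := h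
  exact ⟨∑ j : Fin t, L j.castSucc, L (Fin.last t),
    by rw [← hs, Fin.sum_univ_castSucc],
    ⟨fun j => L j.castSucc, rfl, fun j => hw _⟩, hw _⟩

private lemma hasWalks_prepend_first {t l c : ℕ} (hc : HasWalk E c x x)
    (h : HasWalks E (t + 1) l x y) : HasWalks E (t + 1) (c + l) x y := by
  obtain ⟨L, hs, hw⟩ := h
  refine ⟨Fin.cons (c + L 0) (fun i => L i.succ), ?_, ?_⟩
  · rw [Fin.sum_cons, add_assoc, ← hs, Fin.sum_univ_succ]
  · intro j
    induction j using Fin.cases with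
    | zero => simpa using hasWalk_concat hc (hw 0)
    | succ i => simpa using hw i.succ

variable (u v : V)

private lemma decomp_step :
    ∀ n x y, HasWalk (fun a b => E a b ∨ (a, b) = (u, v)) n x y →
      HasWalk E n x y ∨ ∃ a m, a + 1 + m = n ∧ HasWalk E a x u ∧
        HasWalk (fun a b => E a b ∨ (a, b) = (u, v)) m v y := by
  intro n
  induction n with
  | zero =>
    intro x y h
    obtain ⟨f, h1, h2, _⟩ := h
    exact Or.inl ⟨f, h1, h2, fun i => i.elim0⟩
  | succ n ih =>
    intro x y h
    obtain ⟨z, hz, h'⟩ := hasWalk_tail h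
    rcases hz with hz | hz
    · rcases ih z y h' with hp | ⟨a, m, he, hxa, hm⟩
      · exact Or.inl (hasWalk_cons hz hp)
      · exact Or.inr ⟨a + 1, m, by omega, hasWalk_cons hz hxa, hm⟩
    · obtain ⟨hx, hzv⟩ := Prod.mk.inj hz
      subst hx; subst hzv
      exact Or.inr ⟨0, n, by omega, hasWalk_zero E x, h'⟩

private lemma decomp_full :
    ∀ n x y, HasWalk (fun a b => E a b ∨ (a, b) = (u, v)) n x y →
      HasWalk E n x y ∨
        ∃ (k a b : ℕ) (c : Fin k → ℕ), HasWalk E a x u ∧ HasWalk E b v y ∧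
          (∀ i, HasWalk E (c i) v u) ∧ a + b + (∑ i, c i) + k + 1 = n := by
  intro n
  induction n using Nat.strong_induction_on with
  | _ n ih =>
  intro x y h
  rcases decomp_step u v n x y h with hp | ⟨a, m, he, hxa, hm⟩
  · exact Or.inl hp
  · rcases ih m (by omega) v y hm with hp | ⟨k, a', b', c', ha', hb', hc', hsum⟩
    · refine Or.inr ⟨0, a, m, fun i => i.elim0, hxa, hp, fun i => i.elim0, by simp; omega⟩
    · refine Or.inr ⟨k + 1, a, b', Fin.cons a' c', hxa, hb', ?_, ?_⟩
      · intro i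
        induction i using Fin.cases with
        | zero => simpa using ha'
        | succ j => simpa using hc' j
      · rw [Fin.sum_cons]; omega

private lemma loops_walk {t0 l0 : ℕ} (h : HasWalks E t0 l0 v u) :
    HasWalk (fun a b => E a b ∨ (a, b) = (u, v)) (l0 + t0) v v := by
  induction t0 generalizing l0 with
  | zero =>
    have := hasWalks_zero_len h
    exact hasWalk_cast (hasWalk_zero _ v) (by omega)
  | succ t0 ih =>
    obtain ⟨ℓ', n, hln, hrest, hlast⟩ := hasWalks_split h
    have hloop := ih hrest
    have hvu := hasWalk_inl u v hlast
    have hedge : HasWalk (fun a b => E a b ∨ (a, b) = (u, v)) 1 u v :=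
      hasWalk_single (Or.inr rfl)
    exact hasWalk_cast (hasWalk_concat (hasWalk_concat hloop hvu) hedge) (by omega)

private lemma comb_walks {tp l1 l2 : ℕ}
    (h1 : HasWalks (fun a b => E a b ∨ (a, b) = (u, v)) tp l1 x u)
    (h2 : HasWalks (fun a b => E a b ∨ (a, b) = (u, v)) tp l2 v y) :
    HasWalks (fun a b => E a b ∨ (a, b) = (u, v)) tp (l1 + l2 + tp) x y := by
  obtain ⟨A, hA, hA2⟩ := h1
  obtain ⟨B, hB, hB2⟩ := h2
  refine ⟨fun j => A j + (1 + B j), ?_, ?_⟩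
  · rw [Finset.sum_add_distrib, Finset.sum_add_distrib, Finset.sum_const]
    simp [hA, hB]
    omega
  · intro j
    exact hasWalk_concat (hA2 j)
      (hasWalk_cast (hasWalk_cons (E := fun a b => E a b ∨ (a, b) = (u, v)) (Or.inr rfl) (hB2 j))
        (by omega))

end Aux

theorem stmt_9 {V : Type*} (E : V → V → Prop) (u v : V) :
    ∀ (x y : V) (t ℓ : ℕ),
      HasWalks (fun a b => E a b ∨ (a, b) = (u, v)) t ℓ x y ↔
        ∃ tm tp t0 lm l1 l2 l0 : ℕ,
          HasWalks E tm lm x y ∧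
          HasWalks E tp l1 x u ∧
          HasWalks E tp l2 v y ∧
          HasWalks E t0 l0 v u ∧
          (tp = 0 → t0 = 0) ∧
          tm + tp = t ∧
          lm + l1 + l2 + l0 + tp + t0 = ℓ := by
  intro x y t ℓ
  constructor
  · -- forward
    induction t generalizing ℓ with
    | zero =>
      intro h
      have hl := hasWalks_zero_len h
      exact ⟨0, 0, 0, 0, 0, 0, 0, hasWalks_nil, hasWalks_nil, hasWalks_nil, hasWalks_nil,
        fun _ => rfl, rfl, by omega⟩
    | succ t ih =>
      intro h
      obtain ⟨ℓ', n, hln, hrest, hlast⟩ := hasWalks_split h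
      obtain ⟨tm, tp, t0, lm, l1, l2, l0, h1, h2, h3, h4, h5, h6, h7⟩ := ih ℓ' hrest
      rcases decomp_full u v n x y hlast with hp | ⟨k, a, b, c, ha, hb, hc, hsum⟩
      · exact ⟨tm + 1, tp, t0, lm + n, l1, l2, l0,
          hasWalks_append h1 (hasWalks_single hp), h2, h3, h4, h5, by omega, by omega⟩
      · exact ⟨tm, tp + 1, t0 + k, lm, l1 + a, l2 + b, l0 + ∑ i, c i,
          h1, hasWalks_append h2 (hasWalks_single ha), hasWalks_append h3 (hasWalks_single hb),
          hasWalks_append h4 ⟨c, rfl, hc⟩, fun hh => absurd hh (Nat.succ_ne_zero tp),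
          by omega, by omega⟩
  · -- backward
    rintro ⟨tm, tp, t0, lm, l1, l2, l0, h1, h2, h3, h4, h5, h6, h7⟩
    match tp, h5 with
    | 0, h5 =>
      obtain rfl : t0 = 0 := h5 rfl
      have e1 := hasWalks_zero_len h2
      have e2 := hasWalks_zero_len h3
      have e0 := hasWalks_zero_len h4
      obtain rfl : tm = t := by omega
      obtain rfl : lm = ℓ := by omega
      exact hasWalks_inl u v h1
    | (k + 1), h5 =>
      have hloop := loops_walk u v h4
      have hB := hasWalks_prepend_first hloop (hasWalks_inl u v h3)
      have hA := hasWalks_inl u v h2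
      have hcomb := comb_walks u v hA hB
      have hall := hasWalks_append (hasWalks_inl u v h1) hcomb
      subst h6
      exact hasWalks_cast hall (by omega)
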